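/- There exists a constant C(γ) > 0, depending only on γ, such that for all ρ > 0, m ∈ ℝ and ρ∞ > 0: |η̃(ρ, m)| ≤ C(γ) η*_E(ρ, m), where η̃(ρ, m) = η̆(ρ, m) − c₀ρ∞^θ m is the relative entropy obtained from η̆ by subtracting its linearization at (ρ∞, 0). -/
import Mathlib


open Real MeasureTheory

/-- `θ = (γ − 1)/2`. -/
noncomputable def thetaExp (γ : ℝ) : ℝ := (γ - 1) / 2

/-- `λ = (3 − γ)/(2(γ − 1))`. -/
noncomputable def lamExp (γ : ℝ) : ℝ := (3 - γ) / (2 * (γ - 1))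

/-- The weak entropy of the isentropic Euler system with polytropic pressure, generated by `ψ`:
`η^ψ(ρ, u) = ρ ∫_{−1}^{1} ψ(u + ρ^θ s)(1 − s²)^λ ds`. -/
noncomputable def entropy (γ : ℝ) (ψ : ℝ → ℝ) (ρ u : ℝ) : ℝ :=
  ρ * ∫ s in (-1:ℝ)..1, ψ (u + ρ ^ thetaExp γ * s) * (1 - s ^ 2) ^ lamExp γ

/-- The weak entropy flux generated by `ψ`:
`q^ψ(ρ, u) = ρ ∫_{−1}^{1} (u + θρ^θ s) ψ(u + ρ^θ s)(1 − s²)^λ ds`. -/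
noncomputable def entropyFlux (γ : ℝ) (ψ : ℝ → ℝ) (ρ u : ℝ) : ℝ :=
  ρ * ∫ s in (-1:ℝ)..1,
    (u + thetaExp γ * ρ ^ thetaExp γ * s) * ψ (u + ρ ^ thetaExp γ * s) * (1 - s ^ 2) ^ lamExp γ

/-- `κ = (γ − 1)²/(4γ)`. -/
noncomputable def kappaCoeff (γ : ℝ) : ℝ := (γ - 1) ^ 2 / (4 * γ)

/-- The weak entropy `η̆ = η^ψ` generated by `ψ(s) = ½ s|s|`, in the conserved variables
`(ρ, m)` via `u = m/ρ`. -/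
noncomputable def breveEntropyM (γ : ℝ) (ρ m : ℝ) : ℝ :=
  entropy γ (fun s => s * |s| / 2) ρ (m / ρ)

/-- `c₀ = ∫_{−1}^{1} |s|(1 − s²)^λ ds`. -/
noncomputable def cZero (γ : ℝ) : ℝ := ∫ s in (-1:ℝ)..1, |s| * (1 - s ^ 2) ^ lamExp γ

/-- The relative internal energy
`e*(ρ, ρ∞) = (κ/(γ−1))(ρ^γ − ρ∞^γ − γρ∞^{γ−1}(ρ − ρ∞))` with `κ = (γ−1)²/(4γ)`. -/
noncomputable def relInternalEnergy (γ ρ ρinf : ℝ) : ℝ :=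
  kappaCoeff γ / (γ - 1) * (ρ ^ γ - ρinf ^ γ - γ * ρinf ^ (γ - 1) * (ρ - ρinf))

lemma neg_one_lt_lamExp {γ : ℝ} (hγ : 1 < γ) : -1 < lamExp γ := by
  rw [lamExp, lt_div_iff₀ (by linarith)]
  nlinarith

lemma W_nonneg {γ : ℝ} {s : ℝ} (hs : s ∈ Set.Icc (-1:ℝ) 1) :
    0 ≤ (1 - s ^ 2) ^ lamExp γ := by
  apply Real.rpow_nonneg
  nlinarith [hs.1, hs.2]

lemma intervalIntegrable_W {γ : ℝ} (hγ : 1 < γ) :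
    IntervalIntegrable (fun s : ℝ => (1 - s ^ 2) ^ lamExp γ) volume (-1) 1 := by
  set l := lamExp γ with hl
  have hl1 : -1 < l := neg_one_lt_lamExp hγ
  have hmeas : AEStronglyMeasurable (fun s : ℝ => (1 - s ^ 2) ^ l)
      (volume.restrict (Set.uIoc (-1:ℝ) 1)) := by
    apply Measurable.aestronglyMeasurable; measurability
  rcases le_or_gt 0 l with h0 | h0
  · refine (intervalIntegrable_const (c := (1:ℝ))).mono_fun' hmeas ?_
    rw [Filter.EventuallyLE, ae_restrict_iff' measurableSet_uIoc]
    filter_upwards with x hx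
    rw [Set.uIoc_of_le (by norm_num : (-1:ℝ) ≤ 1)] at hx
    have h1 : 0 ≤ 1 - x ^ 2 := by nlinarith [hx.1, hx.2]
    have h2 : 1 - x ^ 2 ≤ 1 := by nlinarith
    simp only [Real.norm_eq_abs, abs_of_nonneg (Real.rpow_nonneg h1 l)]
    exact Real.rpow_le_one h1 h2 h0
  · have hi1 : IntervalIntegrable (fun s : ℝ => (1 + s) ^ l) volume (-1) 1 := by
      have := (intervalIntegral.intervalIntegrable_rpow' (a := 0) (b := 2) hl1).comp_add_left 1
      norm_num at this
      exact this
    have hi2 : IntervalIntegrable (fun s : ℝ => (1 - s) ^ l) volume (-1) 1 := by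
      have := (intervalIntegral.intervalIntegrable_rpow' (a := 0) (b := 2) hl1).comp_sub_left 1
      norm_num at this
      exact this.symm
    refine (hi1.add hi2).mono_fun' hmeas ?_
    rw [Filter.EventuallyLE, ae_restrict_iff' measurableSet_uIoc]
    filter_upwards with x hx
    rw [Set.uIoc_of_le (by norm_num : (-1:ℝ) ≤ 1)] at hx
    have ha : 0 ≤ 1 + x := by linarith [hx.1]
    have hb : 0 ≤ 1 - x := by linarith [hx.2]
    have hfac : (1 - x ^ 2 : ℝ) = (1 - x) * (1 + x) := by ring
    have hW0 : 0 ≤ (1 - x^2) ^ l := Real.rpow_nonneg (by nlinarith) l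
    simp only [Real.norm_eq_abs, abs_of_nonneg hW0, Pi.add_apply]
    rw [hfac, Real.mul_rpow hb ha]
    rcases le_or_gt x 0 with hx0 | hx0
    · have : (1 - x) ^ l ≤ 1 :=
        Real.rpow_le_one_of_one_le_of_nonpos (by linarith) h0.le
      nlinarith [Real.rpow_nonneg ha l, Real.rpow_nonneg hb l,
        mul_le_mul_of_nonneg_right this (Real.rpow_nonneg ha l)]
    · have : (1 + x) ^ l ≤ 1 :=
        Real.rpow_le_one_of_one_le_of_nonpos (by linarith) h0.le
      nlinarith [Real.rpow_nonneg ha l, Real.rpow_nonneg hb l,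
        mul_le_mul_of_nonneg_left this (Real.rpow_nonneg hb l)]

lemma intervalIntegrable_mul_W {γ : ℝ} (hγ : 1 < γ) {f : ℝ → ℝ} (hf : Continuous f) :
    IntervalIntegrable (fun s : ℝ => f s * (1 - s ^ 2) ^ lamExp γ) volume (-1) 1 := by
  set l := lamExp γ
  obtain ⟨M, hM⟩ := (isCompact_Icc (a := (-1:ℝ)) (b := 1)).exists_bound_of_continuousOn
    hf.continuousOn
  have hW := intervalIntegrable_W (γ := γ) hγ
  refine (hW.const_mul M).mono_fun' ?_ ?_
  · rw [Set.uIoc_of_le (by norm_num : (-1:ℝ) ≤ 1)]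
    exact (hf.aestronglyMeasurable.restrict).mul hW.1.aestronglyMeasurable
  · rw [Filter.EventuallyLE, ae_restrict_iff' measurableSet_uIoc]
    filter_upwards with x hx
    rw [Set.uIoc_of_le (by norm_num : (-1:ℝ) ≤ 1)] at hx
    have hxI : x ∈ Set.Icc (-1:ℝ) 1 := ⟨hx.1.le, hx.2⟩
    have hW0 : 0 ≤ (1 - x ^ 2) ^ l := W_nonneg hxI
    have := hM x hxI
    simp only [Real.norm_eq_abs, abs_mul, abs_of_nonneg hW0]
    exact mul_le_mul_of_nonneg_right (by simpa [Real.norm_eq_abs] using this) hW0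

lemma integral_odd_W {γ : ℝ} {f : ℝ → ℝ} (hodd : ∀ x, f (-x) = -f x) :
    (∫ s in (-1:ℝ)..1, f s * (1 - s ^ 2) ^ lamExp γ) = 0 := by
  set g := fun s : ℝ => f s * (1 - s ^ 2) ^ lamExp γ with hg
  have h1 : (∫ s in (-1:ℝ)..1, g (-s)) = ∫ s in (-1:ℝ)..1, g s := by
    simpa using intervalIntegral.integral_comp_neg (a := (-1:ℝ)) (b := 1) g
  have h2 : (∫ s in (-1:ℝ)..1, g (-s)) = -∫ s in (-1:ℝ)..1, g s := by
    have : ∀ s, g (-s) = -(g s) := by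
      intro s
      simp only [hg, neg_sq, hodd]
      ring
    simp_rw [this]
    exact intervalIntegral.integral_neg
  linarith

lemma psi_taylor (u x : ℝ) :
    abs ((u + x) * |u + x| / 2 - x * |x| / 2 - u * |x|) ≤ u ^ 2 / 2 := by
  rcases abs_cases x with ⟨hx1, hx2⟩ | ⟨hx1, hx2⟩ <;>
    rcases abs_cases (u + x) with ⟨h1, h2⟩ | ⟨h1, h2⟩ <;>
    rw [hx1, h1, abs_le] <;> constructor <;>
    nlinarith [sq_nonneg (u + x), sq_nonneg x, sq_nonneg u, sq_nonneg (u + 2*x)]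

lemma keyD {γ ρ b : ℝ} (hγ : 1 < γ) (hρ : 0 < ρ) (hb : 0 < b) :
    ρ * (ρ ^ thetaExp γ - b ^ thetaExp γ) ^ 2 ≤
      ρ ^ γ - b ^ γ - γ * b ^ (γ - 1) * (ρ - b) := by
  set θ := thetaExp γ with hθ
  set X := ρ ^ θ with hX
  set Y := b ^ θ with hY
  have hX0 : 0 < X := Real.rpow_pos_of_pos hρ θ
  have hY0 : 0 < Y := Real.rpow_pos_of_pos hb θ
  have eX : X ^ 2 = ρ ^ (γ - 1) := by
    rw [hX, ← Real.rpow_natCast (ρ ^ θ) 2, ← Real.rpow_mul hρ.le]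
    norm_num [hθ, thetaExp]
  have eY : Y ^ 2 = b ^ (γ - 1) := by
    rw [hY, ← Real.rpow_natCast (b ^ θ) 2, ← Real.rpow_mul hb.le]
    norm_num [hθ, thetaExp]
  have h1 : ρ ^ γ = ρ * X ^ 2 := by
    rw [eX, show γ = 1 + (γ - 1) by ring, Real.rpow_add hρ, Real.rpow_one]
    ring_nf
  have h2 : b ^ γ = b * Y ^ 2 := by
    rw [eY, show γ = 1 + (γ - 1) by ring, Real.rpow_add hb, Real.rpow_one]
    ring_nf
  have ht : 0 < ρ / b := div_pos hρ hb
  have hBer : 1 + (γ + 1) / 2 * (ρ / b - 1) ≤ (ρ / b) ^ ((γ + 1) / 2) := by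
    have := one_add_mul_self_le_rpow_one_add (s := ρ / b - 1) (by linarith)
      (p := (γ + 1) / 2) (by linarith)
    simpa using this
  have h5 : (ρ / b) ^ ((γ + 1) / 2) * (b * Y) = ρ * X := by
    rw [Real.div_rpow hρ.le hb.le]
    have hρβ : ρ ^ ((γ + 1) / 2) = ρ * X := by
      rw [show (γ + 1) / 2 = 1 + θ by rw [hθ, thetaExp]; ring,
        Real.rpow_add hρ, Real.rpow_one, hX]
    have hbβ : b ^ ((γ + 1) / 2) = b * Y := by
      rw [show (γ + 1) / 2 = 1 + θ by rw [hθ, thetaExp]; ring,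
        Real.rpow_add hb, Real.rpow_one, hY]
    rw [hρβ, hbβ]
    field_simp
  have h6 : b * Y + (γ + 1) / 2 * Y * (ρ - b) ≤ ρ * X := by
    have hm := mul_le_mul_of_nonneg_right hBer (by positivity : (0:ℝ) ≤ b * Y)
    rw [h5] at hm
    have he : (1 + (γ + 1) / 2 * (ρ / b - 1)) * (b * Y) =
        b * Y + (γ + 1) / 2 * Y * (ρ - b) := by
      field_simp
    linarith [he ▸ hm]
  rw [h1, h2, ← eY]
  nlinarith [mul_le_mul_of_nonneg_right h6 (by positivity : (0:ℝ) ≤ 2 * Y)]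

lemma key {γ : ℝ} (hγ : 1 < γ) {ρ : ℝ} (hρ : 0 < ρ) (u : ℝ) :
    |entropy γ (fun s => s * |s| / 2) ρ u - cZero γ * ρ ^ thetaExp γ * (ρ * u)| ≤
      ρ * u ^ 2 / 2 * ∫ s in (-1:ℝ)..1, (1 - s ^ 2) ^ lamExp γ := by
  set a := ρ ^ thetaExp γ with ha
  have ha0 : 0 < a := Real.rpow_pos_of_pos hρ _
  set W : ℝ → ℝ := fun s => (1 - s ^ 2) ^ lamExp γ with hWdef
  have hW : IntervalIntegrable W volume (-1) 1 := intervalIntegrable_W hγ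
  have hcont1 : Continuous fun s : ℝ => (u + a * s) * |u + a * s| / 2 := by
    fun_prop
  have hcont2 : Continuous fun s : ℝ => (a * s) * |a * s| / 2 := by fun_prop
  have hcont4 : Continuous fun s : ℝ =>
      (u + a * s) * |u + a * s| / 2 - (a * s) * |a * s| / 2 - u * |a * s| := by fun_prop
  have hF : IntervalIntegrable (fun s => (u + a * s) * |u + a * s| / 2 * W s)
      volume (-1) 1 := intervalIntegrable_mul_W hγ hcont1
  have hG : IntervalIntegrable (fun s => (a * s) * |a * s| / 2 * W s)
      volume (-1) 1 := intervalIntegrable_mul_W hγ hcont2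
  have hH : IntervalIntegrable (fun s => u * a * (|s| * W s)) volume (-1) 1 :=
    (intervalIntegrable_mul_W hγ continuous_abs).const_mul (u * a)
  have hR : IntervalIntegrable (fun s =>
      ((u + a * s) * |u + a * s| / 2 - (a * s) * |a * s| / 2 - u * |a * s|) * W s)
      volume (-1) 1 := intervalIntegrable_mul_W hγ hcont4
  have habs : ∀ s : ℝ, |a * s| = a * |s| := fun s => by
    rw [abs_mul, abs_of_nonneg ha0.le]
  have hfun : (fun s => (u + a * s) * |u + a * s| / 2 * W s) =
      (fun s => ((a * s) * |a * s| / 2 * W s + u * a * (|s| * W s)) +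
        ((u + a * s) * |u + a * s| / 2 - (a * s) * |a * s| / 2 - u * |a * s|) * W s) := by
    funext s
    rw [habs s]
    ring
  have hsplit : (∫ s in (-1:ℝ)..1, (u + a * s) * |u + a * s| / 2 * W s) =
      ((∫ s in (-1:ℝ)..1, (a * s) * |a * s| / 2 * W s) +
        ∫ s in (-1:ℝ)..1, u * a * (|s| * W s)) +
      ∫ s in (-1:ℝ)..1,
        ((u + a * s) * |u + a * s| / 2 - (a * s) * |a * s| / 2 - u * |a * s|) * W s := by
    rw [hfun, intervalIntegral.integral_add (hG.add hH) hR,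
      intervalIntegral.integral_add hG hH]
  have hGzero : (∫ s in (-1:ℝ)..1, (a * s) * |a * s| / 2 * W s) = 0 := by
    apply integral_odd_W (γ := γ)
    intro x
    rw [mul_neg, abs_neg]
    ring
  have hHval : (∫ s in (-1:ℝ)..1, u * a * (|s| * W s)) = u * a * cZero γ := by
    rw [intervalIntegral.integral_const_mul, cZero]
  have hRbound : |∫ s in (-1:ℝ)..1,
      ((u + a * s) * |u + a * s| / 2 - (a * s) * |a * s| / 2 - u * |a * s|) * W s| ≤
      u ^ 2 / 2 * ∫ s in (-1:ℝ)..1, W s := by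
    calc |∫ s in (-1:ℝ)..1,
        ((u + a * s) * |u + a * s| / 2 - (a * s) * |a * s| / 2 - u * |a * s|) * W s|
        ≤ ∫ s in (-1:ℝ)..1,
          |((u + a * s) * |u + a * s| / 2 - (a * s) * |a * s| / 2 - u * |a * s|) * W s| :=
        intervalIntegral.abs_integral_le_integral_abs (by norm_num)
      _ ≤ ∫ s in (-1:ℝ)..1, u ^ 2 / 2 * W s := by
          apply intervalIntegral.integral_mono_on (by norm_num) hR.abs
            (hW.const_mul _)
          intro x hx
          rw [abs_mul, abs_of_nonneg (W_nonneg hx)]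
          exact mul_le_mul_of_nonneg_right (psi_taylor u (a * x)) (W_nonneg hx)
      _ = u ^ 2 / 2 * ∫ s in (-1:ℝ)..1, W s := intervalIntegral.integral_const_mul _ _
  have hent : entropy γ (fun s => s * |s| / 2) ρ u =
      ρ * ((0 + u * a * cZero γ) +
        ∫ s in (-1:ℝ)..1,
          ((u + a * s) * |u + a * s| / 2 - (a * s) * |a * s| / 2 - u * |a * s|) * W s) := by
    rw [entropy, ← ha, ← hGzero, ← hHval, ← hsplit]
  rw [hent]
  set J := ∫ s in (-1:ℝ)..1,
    ((u + a * s) * |u + a * s| / 2 - (a * s) * |a * s| / 2 - u * |a * s|) * W s with hJ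
  have h1 : ρ * ((0 + u * a * cZero γ) + J) - cZero γ * a * (ρ * u) = ρ * J := by ring
  rw [h1, abs_mul, abs_of_nonneg hρ.le]
  calc ρ * |J| ≤ ρ * (u ^ 2 / 2 * ∫ s in (-1:ℝ)..1, W s) :=
        mul_le_mul_of_nonneg_left hRbound hρ.le
    _ = ρ * u ^ 2 / 2 * ∫ s in (-1:ℝ)..1, W s := by ring

set_option maxHeartbeats 2000000 in
/-- The relative entropy `η̃(ρ, m) = η̆(ρ, m) − c₀ρ∞^θ m`, obtained from `η̆` by subtracting
its linearization at `(ρ∞, 0)`, is dominated by the relative mechanical energy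
`η*_E(ρ, m) = m²/(2ρ) + e*(ρ, ρ∞)`. -/
theorem relEntropy_le_relMechEnergy (γ : ℝ) (hγ : 1 < γ) :
    ∃ C : ℝ, 0 < C ∧ ∀ ρ : ℝ, 0 < ρ → ∀ m : ℝ, ∀ ρinf : ℝ, 0 < ρinf →
      |breveEntropyM γ ρ m - cZero γ * ρinf ^ thetaExp γ * m| ≤
        C * (m ^ 2 / (2 * ρ) + relInternalEnergy γ ρ ρinf) := by
  set I0 := ∫ s in (-1:ℝ)..1, (1 - s ^ 2) ^ lamExp γ with hI0
  have hc0 : 0 ≤ cZero γ := by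
    apply intervalIntegral.integral_nonneg (by norm_num)
    intro x hx
    exact mul_nonneg (abs_nonneg x) (W_nonneg hx)
  have hI00 : 0 ≤ I0 := by
    apply intervalIntegral.integral_nonneg (by norm_num)
    intro x hx
    exact W_nonneg hx
  have hK0 : 0 ≤ 2 * γ * cZero γ / (γ - 1) :=
    div_nonneg (mul_nonneg (by linarith) hc0) (by linarith)
  refine ⟨cZero γ + I0 + 2 * γ * cZero γ / (γ - 1) + 1, by linarith, ?_⟩
  intro ρ hρ m ρinf hρinf
  set c0 := cZero γ with hc0def
  set θ := thetaExp γ with hθdef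
  set A := m ^ 2 / (2 * ρ) with hA
  set E := relInternalEnergy γ ρ ρinf with hE
  set Δ := ρ ^ θ - ρinf ^ θ with hΔ
  set D := ρ ^ γ - ρinf ^ γ - γ * ρinf ^ (γ - 1) * (ρ - ρinf) with hD
  have hne1 : γ - 1 ≠ 0 := by linarith
  have hne2 : (4:ℝ) * γ ≠ 0 := by positivity
  have hA0 : 0 ≤ A := by rw [hA]; positivity
  have hkD : ρ * Δ ^ 2 ≤ D := keyD hγ hρ hρinf
  have hED : E = (γ - 1) / (4 * γ) * D := by
    rw [hE, relInternalEnergy, kappaCoeff, ← hD]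
    congr 1
    rw [div_div, sq]
    rw [mul_comm (4 * γ) (γ - 1)]
    exact mul_div_mul_left _ _ hne1
  have hD0 : 0 ≤ D := le_trans (mul_nonneg hρ.le (sq_nonneg Δ)) hkD
  have hE0 : 0 ≤ E := by
    rw [hED]
    apply mul_nonneg _ hD0
    apply div_nonneg (by linarith) (by linarith)
  -- the key estimate with u = m / ρ
  have hkey := key hγ hρ (m / ρ)
  have hmρ : ρ * (m / ρ) = m := by field_simp
  have hAρ : ρ * (m / ρ) ^ 2 / 2 = A := by rw [hA]; field_simp
  rw [hmρ, hAρ] at hkey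
  have hT1 : |breveEntropyM γ ρ m - c0 * ρ ^ θ * m| ≤ A * I0 := by
    rw [breveEntropyM]
    exact hkey
  -- AM-GM
  have hAM : |m| * |Δ| ≤ A + ρ * Δ ^ 2 / 2 := by
    have h2 : 2 * ρ * (|m| * |Δ|) ≤ m ^ 2 + ρ ^ 2 * Δ ^ 2 := by
      nlinarith [sq_nonneg (|m| - ρ * |Δ|), sq_abs m, sq_abs Δ, abs_nonneg m, abs_nonneg Δ]
    calc |m| * |Δ| ≤ (m ^ 2 + ρ ^ 2 * Δ ^ 2) / (2 * ρ) := by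
          rw [le_div_iff₀ (by positivity)]
          linarith
      _ = A + ρ * Δ ^ 2 / 2 := by rw [hA]; field_simp
  have hT2 : |c0 * ρ ^ θ * m - c0 * ρinf ^ θ * m| ≤ c0 * A + c0 * (ρ * Δ ^ 2 / 2) := by
    have h3 : c0 * ρ ^ θ * m - c0 * ρinf ^ θ * m = c0 * (Δ * m) := by rw [hΔ]; ring
    rw [h3, abs_mul, abs_of_nonneg hc0, abs_mul]
    calc c0 * (|Δ| * |m|) ≤ c0 * (A + ρ * Δ ^ 2 / 2) := by
          apply mul_le_mul_of_nonneg_left _ hc0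
          rw [mul_comm]
          exact hAM
      _ = c0 * A + c0 * (ρ * Δ ^ 2 / 2) := by ring
  have heq : 2 * γ * c0 / (γ - 1) * E = c0 * (D / 2) := by
    rw [hED]
    field_simp
    ring
  have hT3 : c0 * (ρ * Δ ^ 2 / 2) ≤ 2 * γ * c0 / (γ - 1) * E := by
    rw [heq]
    refine mul_le_mul_of_nonneg_left ?_ hc0
    have h4 := hkD
    clear_value Δ D
    linarith
  clear_value I0 c0 θ A E Δ D
  calc |breveEntropyM γ ρ m - c0 * ρinf ^ θ * m|
      ≤ |breveEntropyM γ ρ m - c0 * ρ ^ θ * m| + |c0 * ρ ^ θ * m - c0 * ρinf ^ θ * m| :=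
        abs_sub_le _ _ _
    _ ≤ A * I0 + (c0 * A + c0 * (ρ * Δ ^ 2 / 2)) := add_le_add hT1 hT2
    _ ≤ A * I0 + c0 * A + 2 * γ * c0 / (γ - 1) * E := by linarith
    _ ≤ (c0 + I0 + 2 * γ * c0 / (γ - 1) + 1) * (A + E) := by
        nlinarith [mul_nonneg hK0 hA0, mul_nonneg hc0 hE0, mul_nonneg hI00 hE0, hA0, hE0]
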